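/- arXiv:1410.6294 — 3 statements merged into one kernel-verified Lean document; each statement's English description precedes it below -/
import Mathlib

section
/- (Delsarte clique bound.) Let Γ be a distance-regular graph of diameter d ≥ 2 with valency k, and let θ_min denote the smallest eigenvalue of its adjacency matrix (so θ_min < 0). Then every clique C of Γ satisfies |C| ≤ 1 + k/(−θ_min). -/
open SimpleGraph

/-- A finite connected simple graph `G` is *distance-regular* with diameter `d` and
intersection numbers `b i` and `c i`: for any two vertices `u`, `v` at distance `i ≤ d`,
the vertex `v` has exactly `b i` neighbours at distance `i + 1` from `u` and exactly
`c i` neighbours at distance `i - 1` from `u`.  (This forces the conventions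
`c 0 = 0` and `b d = 0`.) -/
def IsDistRegular {V : Type*} [Fintype V] (G : SimpleGraph V) (d : ℕ) (b c : ℕ → ℕ) : Prop :=
  G.Connected ∧ G.diam = d ∧
    (∀ i ≤ d, ∀ u v : V, G.dist u v = i →
      {w : V | G.Adj v w ∧ G.dist u w = i + 1}.ncard = b i) ∧
    (∀ i ≤ d, ∀ u v : V, G.dist u v = i →
      {w : V | G.Adj v w ∧ G.dist u w = i - 1}.ncard = c i)

/-!
Let `A` be the adjacency matrix and `p = ∏_{μ ≠ θmin} (X - μ)`, the product over the other
eigenvalues. Then `E = p(A)²` is positive semidefinite, nonzero and satisfies `A E = θmin E`.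
Since `Γ` is distance-regular, every polynomial in `A` has entries depending only on the distance,
so `E` has constant diagonal `e₀ > 0` and constant value `e₁` on edges, and comparing diagonal
entries of `A E = θmin E` gives `k e₁ = θmin e₀`. Evaluating the quadratic form of `E` at the
indicator vector of a clique `C` gives `e₀ + (|C| - 1) e₁ ≥ 0`, which rearranges to the bound.
Finally `θmin < 0`, as `A` is not positive semidefinite once `Γ` has an edge.
-/

open Polynomial Matrix Finset
open scoped MatrixOrder

namespace Matrix.IsHermitian

variable {n : Type*} [Fintype n] [DecidableEq n] {A : Matrix n n ℝ}

theorem exists_aeval_posSemidef_mul_eq_smul (hA : A.IsHermitian) {θ : ℝ}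
    (hθ : θ ∈ spectrum ℝ A) :
    ∃ q : ℝ[X], (aeval A q).PosSemidef ∧ aeval A q ≠ 0 ∧ A * aeval A q = θ • aeval A q := by
  set p : ℝ[X] := ∏ μ ∈ A.finite_real_spectrum.toFinset.erase θ, (X - C μ)
  have hp_eval (μ : ℝ) (hμ : μ ∈ spectrum ℝ A) (hne : μ ≠ θ) : p.eval μ = 0 := by
    rw [eval_prod]
    exact prod_eq_zero (mem_erase.mpr ⟨hne, (Set.Finite.mem_toFinset _).mpr hμ⟩) (by simp)
  have hpθ : p.eval θ ≠ 0 := by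
    simp [p, eval_prod, prod_eq_zero_iff, sub_eq_zero]
  have hcfc : aeval A (p ^ 2) = cfc (fun x => p.eval x ^ 2) A := by
    rw [← cfc_polynomial (p ^ 2) A hA.isSelfAdjoint]
    simp only [eval_pow]
  refine ⟨p ^ 2, ?_, ?_, ?_⟩ <;> rw [hcfc]
  · exact nonneg_iff_posSemidef.mp (cfc_nonneg fun x _ => sq_nonneg _)
  · intro h
    rw [← cfc_zero ℝ A, cfc_eq_cfc_iff_eqOn] at h
    exact hpθ (pow_eq_zero_iff two_ne_zero |>.mp (h hθ))
  · nth_rw 1 [← cfc_id' ℝ A]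
    rw [← cfc_mul .., ← cfc_const_mul ..]
    refine cfc_congr fun μ hμ => ?_
    rcases eq_or_ne μ θ with rfl | hne
    · rfl
    · simp [hp_eval μ hμ hne]

end Matrix.IsHermitian

theorem Matrix.PosSemidef.pos_of_ne_zero_of_diag_eq {n : Type*} [Fintype n] {E : Matrix n n ℝ}
    (hE : E.PosSemidef) (hE0 : E ≠ 0) {e : ℝ} (hdiag : ∀ i, E i i = e) : 0 < e := by
  have htrace : E.trace = Fintype.card n * e := by simp [trace, hdiag]
  have hpos : 0 < E.trace := hE.trace_nonneg.lt_of_ne' (mt hE.trace_eq_zero_iff.mp hE0)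
  rw [htrace] at hpos
  exact pos_of_mul_pos_right hpos (Nat.cast_nonneg _)

namespace SimpleGraph

variable {V : Type*} [Fintype V] {G : SimpleGraph V}

theorem IsClique.card_mul_nonneg_of_posSemidef {E : Matrix V V ℝ} (hE : E.PosSemidef)
    {C : Finset V} (hC : G.IsClique (C : Set V)) {e₀ e₁ : ℝ} (hdiag : ∀ u, E u u = e₀)
    (hedge : ∀ u v, G.Adj u v → E u v = e₁) : 0 ≤ #C * (e₀ + (#C - 1) * e₁) := by
  classical
  have hrow : ∀ u ∈ C, ∑ v ∈ C, E u v = e₀ + (#C - 1) * e₁ := fun u hu => by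
    rw [← add_sum_erase C _ hu, hdiag, sum_congr rfl fun v hv => hedge u v
      (hC hu (mem_of_mem_erase hv) (ne_of_mem_erase hv).symm), sum_const, card_erase_of_mem hu,
      nsmul_eq_mul, Nat.cast_sub (card_pos.mpr ⟨u, hu⟩), Nat.cast_one]
  have hform := hE.dotProduct_mulVec_nonneg fun v => if v ∈ C then 1 else 0
  simp only [star_trivial, dotProduct, mulVec, mul_ite, ite_mul, mul_one, mul_zero, one_mul,
    zero_mul, sum_ite_mem, univ_inter] at hform
  rwa [sum_congr rfl hrow, sum_const, nsmul_eq_mul] at hform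

variable [DecidableRel G.Adj]

theorem not_posSemidef_adjMatrix [DecidableEq V] {u v : V} (h : G.Adj u v) :
    ¬ (G.adjMatrix ℝ).PosSemidef := fun hA => by
  have hform := hA.dotProduct_mulVec_nonneg (Pi.single u 1 - Pi.single v 1)
  norm_num [mulVec_sub, mulVec_single, sub_dotProduct, dotProduct_sub, single_dotProduct,
    adjMatrix_apply, h, h.symm] at hform

theorem IsClique.card_le_of_posSemidef_mul_eq_smul {k : ℕ} (hreg : G.IsRegularOfDegree k)
    {θ : ℝ} (hθ : θ < 0) {E : Matrix V V ℝ} (hE : E.PosSemidef)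
    (hAE : G.adjMatrix ℝ * E = θ • E) {e₀ e₁ : ℝ} (he₀ : 0 < e₀) (hdiag : ∀ u, E u u = e₀)
    (hedge : ∀ u v, G.Adj u v → E u v = e₁) {C : Finset V} (hC : G.IsClique (C : Set V)) :
    (#C : ℝ) ≤ 1 + k / (-θ) := by
  rcases C.eq_empty_or_nonempty with rfl | ⟨u, hu⟩
  · have : 0 ≤ (k : ℝ) / -θ := div_nonneg k.cast_nonneg (neg_nonneg.mpr hθ.le)
    simpa using add_nonneg zero_le_one this
  have hke : k * e₁ = θ * e₀ := by
    have h := congrFun₂ hAE u u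
    rwa [adjMatrix_mul_apply,
      sum_congr rfl fun w hw => hedge w u ((G.mem_neighborFinset u w).mp hw).symm, sum_const,
      card_neighborFinset_eq_degree, hreg u, nsmul_eq_mul, Matrix.smul_apply, smul_eq_mul,
      hdiag] at h
  have hrow : 0 ≤ e₀ + (#C - 1) * e₁ :=
    nonneg_of_mul_nonneg_right (hC.card_mul_nonneg_of_posSemidef hE hdiag hedge)
      (by exact_mod_cast card_pos.mpr ⟨u, hu⟩)
  have hscaled : 0 ≤ e₀ * (k + (#C - 1) * θ) :=
    calc 0 ≤ k * (e₀ + (#C - 1) * e₁) := mul_nonneg k.cast_nonneg hrow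
      _ = e₀ * (k + (#C - 1) * θ) := by linear_combination (#C - 1 : ℝ) * hke
  rw [← sub_le_iff_le_add', le_div_iff₀ (neg_pos.mpr hθ)]
  linarith [(mul_nonneg_iff_of_pos_left he₀).mp hscaled]

theorem sum_neighborFinset_split_by_dist {M : Type*} [AddCommMonoid M] {u v : V}
    (huv : G.dist u v ≠ 0) (F : V → M) :
    ∑ w ∈ G.neighborFinset v, F w =
      ∑ w ∈ G.neighborFinset v with G.dist u w = G.dist u v - 1, F w +
      ∑ w ∈ G.neighborFinset v with G.dist u w = G.dist u v, F w +
      ∑ w ∈ G.neighborFinset v with G.dist u w = G.dist u v + 1, F w := by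
  have hmaps : ∀ w ∈ G.neighborFinset v,
      G.dist u w ∈ ({G.dist u v - 1, G.dist u v, G.dist u v + 1} : Finset ℕ) := fun w hw => by
    rcases ((G.mem_neighborFinset v w).mp hw).diff_dist_adj (u := u) with h | h | h <;> simp [h]
  rw [← sum_fiberwise_of_maps_to hmaps, sum_insert (by simp; omega), sum_pair (by omega),
    add_assoc]

end SimpleGraph

namespace IsDistRegular

theorem exists_adj {V : Type*} [Fintype V] {G : SimpleGraph V} {d : ℕ} {b c : ℕ → ℕ}
    (hG : IsDistRegular G d b c) (hd : d ≠ 0) : ∃ u v, G.Adj u v := by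
  have : Nontrivial V := by
    rw [← not_subsingleton_iff_nontrivial]
    intro
    exact hd (hG.2.1 ▸ G.diam_eq_zero.mpr (Or.inr ‹_›))
  obtain ⟨u⟩ := hG.1.nonempty
  exact ⟨u, hG.1.preconnected.exists_adj_of_nontrivial u⟩

variable {V : Type*} [Fintype V] {G : SimpleGraph V} {d : ℕ} {b c : ℕ → ℕ}
  (hG : IsDistRegular G d b c)
include hG

theorem dist_le (u v : V) : G.dist u v ≤ d :=
  have := hG.1.nonempty
  hG.2.1 ▸ G.dist_le_diam (G.connected_iff_ediam_ne_top.mp hG.1)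

variable [DecidableRel G.Adj]

theorem card_neighborFinset_filter_dist_succ (u v : V) :
    #{w ∈ G.neighborFinset v | G.dist u w = G.dist u v + 1} = b (G.dist u v) := by
  rw [← hG.2.2.1 _ (hG.dist_le u v) u v rfl, ← Set.ncard_coe_finset]
  congr
  ext w
  simp

theorem card_neighborFinset_filter_dist_pred (u v : V) :
    #{w ∈ G.neighborFinset v | G.dist u w = G.dist u v - 1} = c (G.dist u v) := by
  rw [← hG.2.2.2 _ (hG.dist_le u v) u v rfl, ← Set.ncard_coe_finset]
  congr
  ext w
  simp

theorem degree_eq (v : V) : G.degree v = b 0 := by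
  have h := hG.card_neighborFinset_filter_dist_succ v v
  rw [G.dist_self, zero_add, filter_true_of_mem fun w hw =>
    dist_eq_one_iff_adj.mpr ((G.mem_neighborFinset v w).mp hw)] at h
  rw [← G.card_neighborFinset_eq_degree, h]

-- `b 0 - b i - c i` is the intersection number `aᵢ`; the subtraction does not truncate.
theorem sum_neighborFinset_comp_dist {M : Type*} [AddCommMonoid M] (f : ℕ → M) (u v : V) :
    ∑ w ∈ G.neighborFinset v, f (G.dist u w) =
      c (G.dist u v) • f (G.dist u v - 1) +
      (b 0 - b (G.dist u v) - c (G.dist u v)) • f (G.dist u v) +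
      b (G.dist u v) • f (G.dist u v + 1) := by
  rcases eq_or_ne (G.dist u v) 0 with huv | huv
  · obtain rfl := hG.1.dist_eq_zero_iff.mp huv
    have hc : c 0 = 0 := by
      have h := hG.card_neighborFinset_filter_dist_pred u u
      rw [G.dist_self] at h
      rw [← h, card_eq_zero, filter_eq_empty_iff]
      intro w hw
      rw [hG.1.dist_eq_zero_iff]
      exact ((G.mem_neighborFinset u w).mp hw).ne
    rw [sum_congr rfl fun w hw => by
        rw [dist_eq_one_iff_adj.mpr ((G.mem_neighborFinset u w).mp hw)],
      sum_const, card_neighborFinset_eq_degree, hG.degree_eq, G.dist_self, hc]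
    simp
  · have hfiber (m : ℕ) : ∑ w ∈ G.neighborFinset v with G.dist u w = m, f (G.dist u w) =
        #{w ∈ G.neighborFinset v | G.dist u w = m} • f m :=
      sum_eq_card_nsmul fun w hw => by rw [(mem_filter.mp hw).2]
    have hcard := sum_neighborFinset_split_by_dist huv fun _ => 1
    simp only [← card_eq_sum_ones, card_neighborFinset_eq_degree, hG.degree_eq,
      hG.card_neighborFinset_filter_dist_pred, hG.card_neighborFinset_filter_dist_succ] at hcard
    rw [sum_neighborFinset_split_by_dist huv, hfiber, hfiber, hfiber,
      hG.card_neighborFinset_filter_dist_pred, hG.card_neighborFinset_filter_dist_succ]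
    congr 3
    omega

theorem exists_aeval_adjMatrix_apply_eq [DecidableEq V] {R : Type*} [CommSemiring R]
    (q : R[X]) : ∃ f : ℕ → R, ∀ u v, aeval (G.adjMatrix R) q u v = f (G.dist u v) := by
  induction q using Polynomial.induction_on with
  | C a =>
    refine ⟨fun i => if i = 0 then a else 0, fun u v => ?_⟩
    simp [algebraMap_matrix_apply, hG.1.dist_eq_zero_iff]
  | add p q hp hq =>
    obtain ⟨f, hf⟩ := hp
    obtain ⟨g, hg⟩ := hq
    exact ⟨f + g, fun u v => by simp [hf, hg]⟩
  | monomial n a h =>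
    obtain ⟨f, hf⟩ := h
    refine ⟨fun i => c i • f (i - 1) + (b 0 - b i - c i) • f i + b i • f (i + 1), fun u v => ?_⟩
    rw [pow_succ, ← mul_assoc, map_mul, aeval_X, mul_adjMatrix_apply]
    simp only [hf]
    exact hG.sum_neighborFinset_comp_dist f u v

end IsDistRegular

/-- **Delsarte clique bound.**  In a distance-regular graph of diameter `d ≥ 2` with
valency `k` and smallest eigenvalue `θmin` (which is negative), every clique `C`
satisfies `|C| ≤ 1 + k / (-θmin)`. -/
theorem delsarte_clique_bound {V : Type*} [Fintype V] [DecidableEq V] (G : SimpleGraph V)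
    [DecidableRel G.Adj] (d : ℕ) (b c : ℕ → ℕ) (k : ℕ) (hd : 2 ≤ d)
    (hG : IsDistRegular G d b c) (hk : b 0 = k) (θmin : ℝ)
    (hθ : Module.End.HasEigenvalue (Matrix.toLin' (G.adjMatrix ℝ)) θmin)
    (hθmin : ∀ θ : ℝ, Module.End.HasEigenvalue (Matrix.toLin' (G.adjMatrix ℝ)) θ → θmin ≤ θ) :
    θmin < 0 ∧ ∀ C : Finset V, G.IsClique (C : Set V) → (C.card : ℝ) ≤ 1 + (k : ℝ) / (-θmin) := by
  set A := G.adjMatrix ℝ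
  have hA : A.IsHermitian := isHermitian_iff_isSymm.mpr G.isSymm_adjMatrix
  have hspec (μ : ℝ) : Module.End.HasEigenvalue (toLin' A) μ ↔ μ ∈ spectrum ℝ A := by
    rw [Module.End.hasEigenvalue_iff_mem_spectrum, spectrum_toLin']
  have hθneg : θmin < 0 := by
    obtain ⟨u, v, huv⟩ := hG.exists_adj (by omega)
    by_contra! h
    exact not_posSemidef_adjMatrix huv <| posSemidef_iff_isHermitian_and_spectrum_nonneg.mpr
      ⟨hA, fun μ hμ => h.trans (hθmin μ ((hspec μ).mpr hμ))⟩
  obtain ⟨q, hE, hE0, hAE⟩ := hA.exists_aeval_posSemidef_mul_eq_smul ((hspec θmin).mp hθ)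
  obtain ⟨f, hf⟩ := hG.exists_aeval_adjMatrix_apply_eq q
  have hdiag (u : V) : aeval A q u u = f 0 := by rw [hf, G.dist_self]
  refine ⟨hθneg, fun C hC => hC.card_le_of_posSemidef_mul_eq_smul (fun v => hk ▸ hG.degree_eq v)
    hθneg hE hAE (hE.pos_of_ne_zero_of_diag_eq hE0 hdiag) hdiag
    (fun u v huv => by rw [hf, dist_eq_one_iff_adj.mpr huv])⟩
end

section
/- (Hoffman's ratio bound.) Let Γ be a connected k-regular simple graph on n vertices that is not complete, and let θ_min denote the smallest eigenvalue of its adjacency matrix (so θ_min < 0). Then every independent set S of Γ satisfies |S| ≤ n·(−θ_min)/(k − θ_min). -/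
/-!
For an independent set `S` of size `s` in a `k`-regular graph on `n` vertices with adjacency
matrix `A`, test the Rayleigh quotient on
`x = S.centeredIndicator = n • 1_S - s • 𝟙`. Independence gives
`1_S ⬝ A 1_S = 0` and regularity gives `A 𝟙 = k 𝟙`, so `x ⬝ A x = -n k s²`, while
`x ⬝ x = n s (n - s)`. As `A - θmin` is positive semidefinite, `θmin (x ⬝ x) ≤ x ⬝ A x`, which
rearranges to `s (k - θmin) ≤ n (-θmin)`. For a single vertex and `k ≥ 1` this forces `θmin < 0`.
-/

open SimpleGraph Matrix Finset

theorem Matrix.IsHermitian.mul_dotProduct_self_le_dotProduct_mulVec {n : Type*} [Fintype n]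
    [DecidableEq n] {A : Matrix n n ℝ} (hA : A.IsHermitian) {θ : ℝ}
    (hθ : ∀ μ ∈ spectrum ℝ A, θ ≤ μ) (x : n → ℝ) : θ * (x ⬝ᵥ x) ≤ x ⬝ᵥ (A *ᵥ x) := by
  have hpsd : (A - algebraMap ℝ _ θ).PosSemidef := by
    refine posSemidef_iff_isHermitian_and_spectrum_nonneg.2 ⟨hA.sub ?_, ?_⟩
    · simp [algebraMap_eq_diagonal]
    · rw [← spectrum.sub_singleton_eq]
      rintro _ ⟨μ, hμ, _, rfl, rfl⟩
      exact sub_nonneg.2 (hθ μ hμ)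
  have := hpsd.dotProduct_mulVec_nonneg x
  rwa [star_trivial, Algebra.algebraMap_eq_smul_one, sub_mulVec, smul_mulVec, one_mulVec,
    dotProduct_sub, dotProduct_smul, smul_eq_mul, sub_nonneg] at this

namespace Finset

variable {V : Type*} [Fintype V]

theorem sum_indicator_one (S : Finset V) : ∑ v, (S : Set V).indicator (1 : V → ℝ) v = #S := by
  rw [sum_indicator_subset _ (subset_univ S)]
  simp

theorem indicator_one_dotProduct_self (S : Finset V) :
    (S : Set V).indicator (1 : V → ℝ) ⬝ᵥ (S : Set V).indicator 1 = #S := by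
  rw [← sum_indicator_one, dotProduct]
  refine sum_congr rfl fun v _ => ?_
  by_cases hv : v ∈ S <;> simp [hv]

noncomputable def centeredIndicator (S : Finset V) : V → ℝ :=
  (Fintype.card V : ℝ) • (S : Set V).indicator 1 - (#S : ℝ) • 1

theorem centeredIndicator_dotProduct_self (S : Finset V) :
    S.centeredIndicator ⬝ᵥ S.centeredIndicator =
      Fintype.card V * #S * (Fintype.card V - #S) := by
  have hχ1 : (S : Set V).indicator 1 ⬝ᵥ 1 = (#S : ℝ) := by
    rw [dotProduct_one, sum_indicator_one]
  have h1χ : 1 ⬝ᵥ (S : Set V).indicator 1 = (#S : ℝ) := by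
    rw [one_dotProduct, sum_indicator_one]
  simp only [centeredIndicator, sub_dotProduct, dotProduct_sub, smul_dotProduct, dotProduct_smul,
    smul_eq_mul, indicator_one_dotProduct_self, hχ1, h1χ, one_dotProduct_one]
  ring

end Finset

namespace SimpleGraph

variable {V : Type*} [Fintype V] {G : SimpleGraph V} [DecidableRel G.Adj] {k : ℕ}

theorem IsRegularOfDegree.adjMatrix_mulVec_one {α : Type*} [NonAssocSemiring α]
    (hreg : G.IsRegularOfDegree k) : G.adjMatrix α *ᵥ 1 = (k : α) • 1 := by
  ext v
  simpa using adjMatrix_mulVec_const_apply_of_regular (a := (1 : α)) hreg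

theorem IsRegularOfDegree.one_dotProduct_adjMatrix_mulVec {α : Type*} [CommSemiring α]
    (hreg : G.IsRegularOfDegree k) (x : V → α) :
    1 ⬝ᵥ (G.adjMatrix α *ᵥ x) = k * ∑ v, x v := by
  rw [dotProduct_mulVec, ← mulVec_transpose, transpose_adjMatrix, hreg.adjMatrix_mulVec_one,
    smul_dotProduct, one_dotProduct, smul_eq_mul]

theorem IsIndepSet.indicator_dotProduct_adjMatrix_mulVec {α : Type*} [NonAssocSemiring α]
    {S : Finset V} (hS : G.IsIndepSet (S : Set V)) :
    (S : Set V).indicator 1 ⬝ᵥ (G.adjMatrix α *ᵥ (S : Set V).indicator 1) = 0 := by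
  refine sum_eq_zero fun v _ => ?_
  by_cases hv : v ∈ S
  · have hN (u : V) (hu : u ∈ G.neighborFinset v) : u ∉ (S : Set V) := fun huS =>
      have hvu := (mem_neighborFinset ..).1 hu
      hS hv huS (G.ne_of_adj hvu) hvu
    rw [adjMatrix_mulVec_apply, sum_eq_zero fun u hu => Set.indicator_of_notMem (hN u hu) _,
      mul_zero]
  · simp [hv]

theorem IsIndepSet.centeredIndicator_dotProduct_adjMatrix_mulVec (hreg : G.IsRegularOfDegree k)
    {S : Finset V} (hS : G.IsIndepSet (S : Set V)) :
    S.centeredIndicator ⬝ᵥ (G.adjMatrix ℝ *ᵥ S.centeredIndicator) =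
      -(Fintype.card V * k * #S ^ 2) := by
  have hχA1 : (S : Set V).indicator 1 ⬝ᵥ (G.adjMatrix ℝ *ᵥ 1) = k * #S := by
    rw [hreg.adjMatrix_mulVec_one, dotProduct_smul, dotProduct_one, sum_indicator_one, smul_eq_mul]
  have h1Aχ : 1 ⬝ᵥ (G.adjMatrix ℝ *ᵥ (S : Set V).indicator 1) = k * #S := by
    rw [hreg.one_dotProduct_adjMatrix_mulVec, sum_indicator_one]
  have h1A1 : 1 ⬝ᵥ (G.adjMatrix ℝ *ᵥ 1) = k * Fintype.card V := by
    rw [hreg.one_dotProduct_adjMatrix_mulVec, ← one_dotProduct, one_dotProduct_one]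
  simp only [centeredIndicator, mulVec_sub, mulVec_smul, sub_dotProduct, dotProduct_sub,
    smul_dotProduct, dotProduct_smul, smul_eq_mul, hS.indicator_dotProduct_adjMatrix_mulVec,
    hχA1, h1Aχ, h1A1]
  ring

theorem IsIndepSet.card_mul_sub_le [DecidableEq V] (hreg : G.IsRegularOfDegree k) {S : Finset V}
    (hS : G.IsIndepSet (S : Set V)) (hSne : S.Nonempty) {θ : ℝ}
    (hθ : ∀ μ ∈ spectrum ℝ (G.adjMatrix ℝ), θ ≤ μ) :
    (#S : ℝ) * (k - θ) ≤ Fintype.card V * (-θ) := by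
  have key := (G.isHermitian_adjMatrix ℝ).mul_dotProduct_self_le_dotProduct_mulVec hθ
    (S.centeredIndicator)
  rw [centeredIndicator_dotProduct_self, hS.centeredIndicator_dotProduct_adjMatrix_mulVec hreg]
    at key
  have hs : (0 : ℝ) < #S := by exact_mod_cast hSne.card_pos
  have hn : (#S : ℝ) ≤ Fintype.card V := by exact_mod_cast S.card_le_univ
  refine le_of_mul_le_mul_left ?_ (mul_pos (hs.trans_le hn) hs)
  linarith

end SimpleGraph

theorem hoffman_ratio_bound_general {V : Type*} [Fintype V] [DecidableEq V] (G : SimpleGraph V)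
    [DecidableRel G.Adj] (k : ℕ) (hconn : G.Connected) (hreg : G.IsRegularOfDegree k)
    (hnotcomplete : G ≠ ⊤) (θmin : ℝ)
    (hθmin : ∀ θ : ℝ, Module.End.HasEigenvalue (Matrix.toLin' (G.adjMatrix ℝ)) θ → θmin ≤ θ) :
    θmin < 0 ∧ ∀ S : Finset V, (∀ u ∈ S, ∀ v ∈ S, ¬ G.Adj u v) →
      (S.card : ℝ) ≤ (Fintype.card V : ℝ) * (-θmin) / ((k : ℝ) - θmin) := by
  have hspec : ∀ μ ∈ spectrum ℝ (G.adjMatrix ℝ), θmin ≤ μ := fun μ hμ =>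
    hθmin μ (Module.End.hasEigenvalue_iff_mem_spectrum.2 (by rwa [spectrum_toLin']))
  have hindep (S : Finset V) (hS : ∀ u ∈ S, ∀ v ∈ S, ¬ G.Adj u v) : G.IsIndepSet S :=
    fun u hu v hv _ => hS u hu v hv
  obtain ⟨v⟩ := hconn.nonempty
  have : Nontrivial V := by
    contrapose! hnotcomplete
    exact Subsingleton.elim _ _
  have hk : (1 : ℝ) ≤ k := by
    exact_mod_cast hreg v ▸ hconn.preconnected.degree_pos_of_nontrivial v
  have hθneg : θmin < 0 := by
    have hv := (hindep {v} (by simp)).card_mul_sub_le hreg (singleton_nonempty v) hspec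
    have hn : (1 : ℝ) ≤ Fintype.card V := by exact_mod_cast Fintype.card_pos
    rw [card_singleton, Nat.cast_one, one_mul] at hv
    nlinarith
  have hkθ : 0 < (k : ℝ) - θmin := by linarith
  refine ⟨hθneg, fun S hS => ?_⟩
  rcases S.eq_empty_or_nonempty with rfl | hSne
  · rw [card_empty, Nat.cast_zero]
    exact div_nonneg (mul_nonneg (Nat.cast_nonneg _) (neg_nonneg.2 hθneg.le)) hkθ.le
  · rw [le_div_iff₀ hkθ]
    exact (hindep S hS).card_mul_sub_le hreg hSne hspec

/-- **Hoffman's ratio bound.**  Let `G` be a connected `k`-regular graph on `n` vertices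
that is not complete, and let `θmin` be the smallest eigenvalue of its adjacency matrix
(which is negative).  Then every independent set `S` satisfies
`|S| ≤ n * (-θmin) / (k - θmin)`. -/
theorem hoffman_ratio_bound {V : Type*} [Fintype V] [DecidableEq V] (G : SimpleGraph V)
    [DecidableRel G.Adj] (k : ℕ) (hconn : G.Connected) (hreg : G.IsRegularOfDegree k)
    (hnotcomplete : G ≠ ⊤) (θmin : ℝ)
    (hθ : Module.End.HasEigenvalue (Matrix.toLin' (G.adjMatrix ℝ)) θmin)
    (hθmin : ∀ θ : ℝ, Module.End.HasEigenvalue (Matrix.toLin' (G.adjMatrix ℝ)) θ → θmin ≤ θ) :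
    θmin < 0 ∧ ∀ S : Finset V, (∀ u ∈ S, ∀ v ∈ S, ¬ G.Adj u v) →
      (S.card : ℝ) ≤ (Fintype.card V : ℝ) * (-θmin) / ((k : ℝ) - θmin) :=
  hoffman_ratio_bound_general G k hconn hreg hnotcomplete θmin hθmin
end

section
/- (Moore graphs of diameter 2.) Let Γ be a distance-regular graph of diameter 2 and girth 5 with valency k. Then k ∈ {2, 3, 7, 57}. -/
/-!
The girth condition makes `Γ` strongly regular with parameters `(k² + 1, k, 0, 1)`, so its
adjacency matrix `A` satisfies `A² + A - (k - 1) I = J` and `A J = k J`. Hence every eigenvalue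
of `A` is `k` or a root `θ` of `θ² + θ - (k - 1)`, i.e. `(2θ + 1)² = 4k - 3`. Taking traces of
`J` and of `A` shows that `k` is a simple eigenvalue and that the other eigenvalues sum to `-k`,
so `k² - 2k = d √(4k - 3)` for an integer `d`. Either `d = 0` and `k = 2`, or `4k - 3 = t²`
with `t ∣ 15`, giving `k ∈ {1, 3, 7, 57}`; and `k ≠ 1` because the diameter is `2`.
-/

open SimpleGraph

open Polynomial Finset

namespace Matrix.IsHermitian

variable {𝕜 n : Type*} [RCLike 𝕜] [Fintype n] [DecidableEq n] {A : Matrix n n 𝕜}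

lemma aeval_eq_conjStarAlgAut (hA : A.IsHermitian) (p : 𝕜[X]) :
    aeval A p = Unitary.conjStarAlgAut 𝕜 _ hA.eigenvectorUnitary
      (diagonal fun i ↦ p.eval (hA.eigenvalues i : 𝕜)) := by
  conv_lhs => rw [hA.spectral_theorem]
  rw [aeval_algHom_apply, ← diagonalAlgHom_apply (R := 𝕜), aeval_algHom_apply, aeval_pi_apply]
  rfl

lemma trace_aeval (hA : A.IsHermitian) (p : 𝕜[X]) :
    (aeval A p).trace = ∑ i, p.eval (hA.eigenvalues i : 𝕜) := by
  rw [hA.aeval_eq_conjStarAlgAut, Unitary.conjStarAlgAut_apply, trace_mul_cycle,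
    Unitary.coe_star_mul_self, one_mul, trace_diagonal]

lemma eval_eigenvalues_eq_zero (hA : A.IsHermitian) {p : 𝕜[X]} (hp : aeval A p = 0) (i : n) :
    p.eval (hA.eigenvalues i : 𝕜) = 0 := by
  rw [hA.aeval_eq_conjStarAlgAut, map_eq_zero_iff _ (EquivLike.injective _)] at hp
  simpa using congr_fun₂ hp i i

end Matrix.IsHermitian

theorem Finset.exists_sum_eq_int_mul_sqrt {ι : Type*} (s : Finset ι) (x : ι → ℝ) {c : ℝ}
    (h : ∀ i ∈ s, x i ^ 2 = c) : ∃ d : ℤ, ∑ i ∈ s, x i = d * √c := by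
  classical
  induction s using Finset.induction_on with
  | empty => exact ⟨0, by simp⟩
  | insert a s ha ih =>
    obtain ⟨d, hd⟩ := ih fun i hi ↦ h i (mem_insert_of_mem hi)
    have hxa : x a ^ 2 = √c ^ 2 := by
      rw [Real.sq_sqrt (h a (mem_insert_self a s) ▸ sq_nonneg _), h a (mem_insert_self a s)]
    rw [sum_insert ha, hd]
    rcases sq_eq_sq_iff_eq_or_eq_neg.mp hxa with hx | hx
    · exact ⟨d + 1, by push_cast; rw [hx]; ring⟩
    · exact ⟨d - 1, by push_cast; rw [hx]; ring⟩

theorem Int.exists_eq_mul_of_sq_eq_mul_sq {N c d : ℤ} (hd : d ≠ 0) (h : N ^ 2 = c * d ^ 2) :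
    ∃ t, N = t * d ∧ t ^ 2 = c := by
  obtain ⟨t, rfl⟩ : d ∣ N := (Int.pow_dvd_pow_iff two_ne_zero).mp ⟨c, by rw [h, mul_comm]⟩
  refine ⟨t, mul_comm d t, mul_right_cancel₀ (pow_ne_zero 2 hd) ?_⟩
  linear_combination h

theorem moore_valency_of_sq_eq {k : ℕ} (hk : 2 ≤ k) {d : ℤ}
    (h : ((k : ℤ) ^ 2 - 2 * k) ^ 2 = (4 * k - 3) * d ^ 2) :
    k = 2 ∨ k = 3 ∨ k = 7 ∨ k = 57 := by
  rcases eq_or_ne d 0 with rfl | hd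
  · left
    have hN : (k : ℤ) ^ 2 - 2 * k = 0 := by simpa using h
    have : (k : ℤ) * (k - 2) = 0 := by linear_combination hN
    rcases mul_eq_zero.mp this with h0 | h2 <;> omega
  obtain ⟨t, hN, ht⟩ := Int.exists_eq_mul_of_sq_eq_mul_sq hd h
  -- `16 (k² - 2k) = t⁴ - 2t² - 15` once `4k - 3 = t²`
  have h15 : t ∣ 15 :=
    ⟨t ^ 3 - 2 * t - 16 * d, by linear_combination (5 - t ^ 2 - 4 * k) * ht - 16 * hN⟩
  have hT : t.natAbs ∈ Nat.divisors 15 :=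
    Nat.mem_divisors.mpr ⟨by simpa using Int.natAbs_dvd_natAbs.mpr h15, by norm_num⟩
  have hTk : (t.natAbs : ℤ) ^ 2 = 4 * k - 3 := by rw [Int.natAbs_sq, ht]
  rw [show Nat.divisors 15 = {1, 3, 5, 15} by decide] at hT
  simp only [mem_insert, mem_singleton] at hT
  rcases hT with hT | hT | hT | hT <;> rw [hT] at hTk <;> omega

theorem exists_int_sq_eq_of_moore_spectrum {ι : Type*} [Fintype ι] (θ : ι → ℝ) {k : ℕ}
    (hk : 1 ≤ k) (hcard : Fintype.card ι = k ^ 2 + 1)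
    (hroot : ∀ i, θ i = k ∨ θ i ^ 2 + θ i + 1 - k = 0)
    (hsum : ∑ i, θ i = 0) (hsumq : ∑ i, (θ i ^ 2 + θ i + 1 - k) = (Fintype.card ι : ℝ)) :
    ∃ d : ℤ, ((k : ℤ) ^ 2 - 2 * k) ^ 2 = (4 * k - 3) * d ^ 2 := by
  classical
  let O := univ.filter (¬ θ · = k)
  have hO : ∀ i ∈ O, θ i ^ 2 + θ i + 1 - k = 0 := fun i hi ↦
    (hroot i).resolve_left (mem_filter.mp hi).2
  have hsplit (f : ℝ → ℝ) :
      ∑ i, f (θ i) = #(univ.filter (θ · = k)) * f k + ∑ i ∈ O, f (θ i) := by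
    rw [← sum_filter_add_sum_filter_not univ (θ · = k), sum_congr rfl fun i hi ↦ by
      rw [(mem_filter.mp hi).2], sum_const, nsmul_eq_mul]
  have hP : #(univ.filter (θ · = k)) = 1 := by
    rw [hsplit (fun t ↦ t ^ 2 + t + 1 - k), sum_eq_zero hO, hcard] at hsumq
    have : (#(univ.filter (θ · = k)) : ℝ) * (k ^ 2 + 1) = 1 * (k ^ 2 + 1) := by
      push_cast at hsumq; linear_combination hsumq
    exact_mod_cast mul_right_cancel₀ (by positivity) this
  have hOsum : ∑ i ∈ O, θ i = -k := by
    rw [hsplit fun t ↦ t, hP] at hsum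
    simp only [Nat.cast_one, one_mul] at hsum
    linarith
  have hOcard : #O = k ^ 2 := by
    have := card_filter_add_card_filter_not (s := univ) (θ · = k)
    rw [hP, card_univ, hcard] at this
    change 1 + #O = _ at this
    omega
  obtain ⟨d, hd⟩ := O.exists_sum_eq_int_mul_sqrt (fun i ↦ 2 * θ i + 1) (c := 4 * k - 3)
    fun i hi ↦ by linear_combination 4 * hO i hi
  have : ((k : ℝ) ^ 2 - 2 * k) = d * √(4 * k - 3) := by
    rw [← hd, sum_add_distrib, ← mul_sum, hOsum, sum_const, hOcard]
    simp only [nsmul_eq_mul, Nat.cast_pow]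
    ring
  refine ⟨d, ?_⟩
  have h43 : (0 : ℝ) ≤ 4 * k - 3 := by
    have : (1 : ℝ) ≤ k := by exact_mod_cast hk
    linarith
  have : ((k : ℝ) ^ 2 - 2 * k) ^ 2 = (4 * k - 3) * d ^ 2 := by
    rw [this, mul_pow, Real.sq_sqrt h43, mul_comm]
  exact_mod_cast this

namespace SimpleGraph

variable {V : Type*} {G : SimpleGraph V} {u v w : V}

theorem commonNeighbors_eq_empty_of_adj (hg : 3 < G.egirth) (h : G.Adj u v) :
    G.commonNeighbors u v = ∅ := by
  refine Set.eq_empty_of_forall_notMem fun w hw ↦ ?_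
  obtain ⟨huw, hvw⟩ := G.mem_commonNeighbors.mp hw
  have hc : (Walk.cons h (.cons hvw (.cons huw.symm .nil))).IsCycle := by
    simp [Walk.isCycle_def, Walk.isTrail_def, h.ne, h.ne', huw.ne, huw.ne', hvw.ne]
  exact hg.not_ge (by simpa using egirth_le_length hc)

theorem commonNeighbors_subsingleton (hg : 4 < G.egirth) (huv : u ≠ v) :
    (G.commonNeighbors u v).Subsingleton := by
  intro x hx y hy
  obtain ⟨hux, hvx⟩ := G.mem_commonNeighbors.mp hx
  obtain ⟨huy, hvy⟩ := G.mem_commonNeighbors.mp hy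
  by_contra hxy
  have hc : (Walk.cons hux (.cons hvx.symm (.cons hvy (.cons huy.symm .nil)))).IsCycle := by
    simp [Walk.isCycle_def, Walk.isTrail_def, hux.ne, hux.ne', hvx.ne', huy.ne, huy.ne', hvy.ne,
      huv, huv.symm, hxy]
  exact hg.not_ge (by simpa using egirth_le_length hc)

variable [Fintype V] [DecidableRel G.Adj]

theorem two_le_degree_of_mem_commonNeighbors (huv : u ≠ v) (hw : w ∈ G.commonNeighbors u v) :
    2 ≤ G.degree w := by
  classical
  rw [← card_neighborFinset_eq_degree, ← card_pair huv]
  exact card_le_card fun x hx ↦ by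
    rcases mem_insert.mp hx with rfl | hx
    · simpa using hw.1.symm
    · simpa [mem_singleton.mp hx] using hw.2.symm

theorem isSRGWith_of_ediam_le_two_of_four_lt_egirth {k : ℕ} (hreg : G.IsRegularOfDegree k)
    (hdiam : G.ediam ≤ 2) (hg : 4 < G.egirth) : G.IsSRGWith (Fintype.card V) k 0 1 where
  card := rfl
  regular := hreg
  of_adj u v h := by
    rw [Fintype.card_eq_zero_iff, Set.isEmpty_coe_sort]
    exact commonNeighbors_eq_empty_of_adj (lt_trans (by norm_num) hg) h
  of_not_adj u v huv h := by
    have hne : (G.commonNeighbors u v).Nonempty := by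
      by_contra hempty
      have := two_lt_edist_iff.mpr ⟨huv, h, Set.not_nonempty_iff_eq_empty.mp hempty⟩
      exact (edist_le_ediam.trans hdiam).not_gt this
    obtain ⟨x, hx⟩ := hne
    exact Fintype.card_eq_one_iff.mpr ⟨⟨x, hx⟩, fun y ↦
      Subtype.ext (commonNeighbors_subsingleton hg huv y.2 hx)⟩

theorem two_le_of_ediam_eq_two {k : ℕ} (hreg : G.IsRegularOfDegree k) (h : G.ediam = 2) :
    2 ≤ k := by
  have : Nonempty V := (nontrivial_of_ediam_ne_zero (h ▸ two_ne_zero)).to_nonempty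
  obtain ⟨u, v, huv⟩ := G.exists_edist_eq_ediam_of_finite
  obtain ⟨hne, -, w, hw⟩ := edist_eq_two_iff.mp (huv.trans h)
  exact hreg w ▸ two_le_degree_of_mem_commonNeighbors hne hw

theorem IsSRGWith.card_eq_sq_add_one [Nonempty V] {n k : ℕ} (h : G.IsSRGWith n k 0 1) :
    n = k ^ 2 + 1 := by
  have hpos : 0 < n := h.card ▸ Fintype.card_pos
  have hkn : k < n := h.card ▸ h.regular (Classical.arbitrary V) ▸ G.degree_lt_card_verts _
  have := h.param_eq G hpos
  obtain ⟨m, rfl⟩ : ∃ m, n = m + k + 1 := ⟨n - k - 1, by omega⟩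
  simp only [Nat.sub_zero, mul_one] at this
  obtain rfl : m = k * (k - 1) := by omega
  rcases k with _ | k
  · rfl
  · simp only [Nat.add_sub_cancel]; ring

theorem IsRegularOfDegree.adjMatrix_mul_of_one {α : Type*} [NonAssocSemiring α] {k : ℕ}
    (h : G.IsRegularOfDegree k) : G.adjMatrix α * Matrix.of 1 = k • Matrix.of 1 := by
  ext i j
  simp [adjMatrix_mul_apply, h i]

variable [DecidableEq V]

theorem IsSRGWith.adjMatrix_sq_add_adjMatrix_add_one {α : Type*} [Ring α] {n k : ℕ}
    (h : G.IsSRGWith n k 0 1) :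
    G.adjMatrix α ^ 2 + G.adjMatrix α + 1 = k • 1 + Matrix.of 1 := by
  rw [h.matrix_eq]
  ext i j
  by_cases hij : i = j <;> by_cases hadj : G.Adj i j <;> simp [hij, hadj]

theorem IsSRGWith.exists_int_sq_eq [Nonempty V] {n k : ℕ} (h : G.IsSRGWith n k 0 1)
    (hk : 1 ≤ k) : ∃ d : ℤ, ((k : ℤ) ^ 2 - 2 * k) ^ 2 = (4 * k - 3) * d ^ 2 := by
  have hA := G.isHermitian_adjMatrix ℝ
  set q : ℝ[X] := X ^ 2 + X + 1 - C (k : ℝ)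
  have hq : aeval (G.adjMatrix ℝ) q = Matrix.of 1 := by
    simp only [q, map_sub, map_add, aeval_X_pow, aeval_X, map_one, aeval_C,
      Algebra.algebraMap_eq_smul_one, h.adjMatrix_sq_add_adjMatrix_add_one, Nat.cast_smul_eq_nsmul]
    abel
  have hann : aeval (G.adjMatrix ℝ) ((X - C (k : ℝ)) * q) = 0 := by
    rw [aeval_mul, hq]
    simp only [map_sub, aeval_X, aeval_C, Algebra.algebraMap_eq_smul_one, sub_mul, smul_mul_assoc,
      one_mul, h.regular.adjMatrix_mul_of_one, Nat.cast_smul_eq_nsmul, sub_self]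
  refine exists_int_sq_eq_of_moore_spectrum hA.eigenvalues hk (h.card ▸ h.card_eq_sq_add_one)
    (fun i ↦ ?_) ?_ ?_
  · simpa [q, sub_eq_zero] using hA.eval_eigenvalues_eq_zero hann i
  · simpa using hA.trace_eq_sum_eigenvalues.symm.trans (G.trace_adjMatrix ℝ)
  · have := hA.trace_aeval q
    rw [hq] at this
    simpa [q, Matrix.trace] using this.symm

end SimpleGraph

namespace IsDistRegular

variable {V : Type*} [Fintype V] {G : SimpleGraph V} {d : ℕ} {b c : ℕ → ℕ}

theorem isRegularOfDegree [DecidableRel G.Adj] (hG : IsDistRegular G d b c) :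
    G.IsRegularOfDegree (b 0) := fun v ↦ by
  have : {w | G.Adj v w ∧ G.dist v w = 0 + 1} = G.neighborSet v := by
    ext w
    simp [dist_eq_one_iff_adj]
  rw [← hG.2.2.1 0 (Nat.zero_le d) v v G.dist_self, this, Set.ncard_eq_toFinset_card',
    ← neighborFinset_def, card_neighborFinset_eq_degree]

theorem ediam_eq (hG : IsDistRegular G d b c) : G.ediam = d := by
  have : Nonempty V := hG.1.nonempty
  rw [← hG.2.1, diam, ENat.natCast_toNat (connected_iff_ediam_ne_top.mp hG.1)]

end IsDistRegular

/-- **Moore graphs of diameter 2.**  A distance-regular graph of diameter `2` and girth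
`5` with valency `k` satisfies `k ∈ {2, 3, 7, 57}`. -/
theorem moore_graph_valency {V : Type*} [Fintype V] (G : SimpleGraph V)
    (b c : ℕ → ℕ) (k : ℕ) (hG : IsDistRegular G 2 b c) (hgirth : G.girth = 5)
    (hk : b 0 = k) :
    k = 2 ∨ k = 3 ∨ k = 7 ∨ k = 57 := by
  classical
  have : Nonempty V := hG.1.nonempty
  have hreg : G.IsRegularOfDegree k := hk ▸ hG.isRegularOfDegree
  have hdiam : G.ediam = 2 := hG.ediam_eq
  have hegirth : 4 < G.egirth := by
    rw [(ENat.toNat_eq_iff (by norm_num)).mp hgirth]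
    norm_num
  have hsrg := isSRGWith_of_ediam_le_two_of_four_lt_egirth hreg hdiam.le hegirth
  have hk2 : 2 ≤ k := two_le_of_ediam_eq_two hreg hdiam
  obtain ⟨d, hd⟩ := hsrg.exists_int_sq_eq (by omega)
  exact moore_valency_of_sq_eq hk2 hd
end
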